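/- arXiv:1310.2031 — 4 statements merged into one kernel-verified Lean document; each statement's English description precedes it below -/
import Mathlib

section
/- Let α be a limit ordinal and X a set. Every contractive function F : URel_α(X) → URel_α(X) has a unique fixed point, i.e., there exists exactly one R ∈ URel_α(X) with F(R) = R. -/
/-!
Uniform subsets indexed by a limit ordinal `α`, and the unique fixed point
property of contractive functions on them.
-/

/-- An `α`-indexed uniform subset on `X`: a family `(R_β)_{β<α}` of subsets of
`X` such that `R₀ = X`, `R_{β+1} ⊆ R_β`, and `R_λ = ⋂_{β<λ} R_β` at limit
ordinals `λ < α`. -/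
structure URel (α : Ordinal.{u}) (X : Type v) where
  rel : ∀ β : Ordinal.{u}, β < α → Set X
  zero : ∀ h : (0 : Ordinal.{u}) < α, rel 0 h = Set.univ
  succ_subset : ∀ β (h : β < α) (h' : β + 1 < α), rel (β + 1) h' ⊆ rel β h
  limit_eq : ∀ β (h : β < α), Order.IsSuccLimit β →
    rel β h = ⋂ γ, ⋂ hγ : γ < β, rel γ (hγ.trans h)

/-- `R` and `S` are `ν`-equivalent: `R_β = S_β` for all `β ≤ ν`. -/
def URel.NEquiv {α : Ordinal.{u}} {X : Type v} (R S : URel α X) (ν : Ordinal.{u}) : Prop :=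
  ∀ β (hβ : β < α), β ≤ ν → R.rel β hβ = S.rel β hβ

/-- `F` is contractive: whenever `R` and `S` are `ν`-equivalent (`ν < α`),
`F R` and `F S` are `(ν+1)`-equivalent. -/
def Contractive {α : Ordinal.{u}} {X : Type v} (F : URel α X → URel α X) : Prop :=
  ∀ R S ν, ν < α → R.NEquiv S ν → (F R).NEquiv (F S) (ν + 1)

/-!
Two fixed points agree at level `0` and at limit levels for free, and contractivity carries
agreement up to level `ν` over to level `ν + 1`; so they agree everywhere.

For existence, build the levels by well-founded recursion: level `γ` is read off from `F`
applied to the uniform subset generated by the levels below `γ`. By the same propagation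
argument, the images under `F` of the stages at `γ` and `γ'` agree up to `min γ γ'`, so later
stages never revise earlier levels, and the uniform subset generated by all levels is fixed by `F`.
-/

open Function

namespace URel

variable {α : Ordinal.{u}} {X : Type v}

theorem ext {R S : URel α X} (h : ∀ β hβ, R.rel β hβ = S.rel β hβ) : R = S := by
  cases R; cases S
  congr
  exact funext fun β => funext (h β)

theorem rel_anti (R : URel α X) {β γ : Ordinal.{u}} (hβγ : β ≤ γ) (hγ : γ < α) :
    R.rel γ hγ ⊆ R.rel β (hβγ.trans_lt hγ) := by
  induction γ using Ordinal.limitRecOn generalizing β with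
  | zero =>
    obtain rfl := nonpos_iff_eq_zero.mp hβγ
    rfl
  | add_one ν ih =>
    rcases hβγ.lt_or_eq with hlt | rfl
    · exact (R.succ_subset ν _ hγ).trans
        (ih (Order.lt_add_one_iff.mp hlt) ((lt_add_one ν).trans hγ))
    · rfl
  | limit γ hlim _ =>
    rcases hβγ.lt_or_eq with hlt | rfl
    · rw [R.limit_eq γ hγ hlim]
      exact Set.iInter₂_subset β hlt
    · rfl

theorem nequiv_of_succ {R S : URel α X} {μ : Ordinal.{u}}
    (h : ∀ ν (hν : ν + 1 < α), ν + 1 ≤ μ → R.NEquiv S ν → R.rel (ν + 1) hν = S.rel (ν + 1) hν) :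
    R.NEquiv S μ := by
  induction μ using Ordinal.limitRecOn with
  | zero =>
    intro β hβ hβ0
    obtain rfl := nonpos_iff_eq_zero.mp hβ0
    rw [R.zero, S.zero]
  | add_one ν ih =>
    have hν : R.NEquiv S ν := ih fun ν' hν' hle => h ν' hν' (hle.trans (lt_add_one ν).le)
    intro β hβ hβν
    rcases hβν.lt_or_eq with hlt | rfl
    · exact hν β hβ (Order.lt_add_one_iff.mp hlt)
    · exact h ν hβ le_rfl hν
  | limit μ hlim ih =>
    have hbelow : ∀ β < μ, R.NEquiv S β := fun β hβμ =>
      ih β hβμ fun ν hν hle => h ν hν (hle.trans hβμ.le)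
    intro β hβ hβμ
    rcases hβμ.lt_or_eq with hlt | rfl
    · exact hbelow β hlt β hβ le_rfl
    · rw [R.limit_eq β hβ hlim, S.limit_eq β hβ hlim]
      exact Set.iInter₂_congr fun γ hγ => hbelow γ hγ γ _ le_rfl

theorem eq_of_succ {R S : URel α X}
    (h : ∀ ν (hν : ν + 1 < α), R.NEquiv S ν → R.rel (ν + 1) hν = S.rel (ν + 1) hν) :
    R = S :=
  ext fun β hβ => nequiv_of_succ (μ := α) (fun ν hν _ => h ν hν) β hβ hβ.le

/-- The largest uniform subset whose level `ε + 1` lies in `E (ε + 1)` for all `ε + 1 < γ`.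
It only reads `E` below `γ`, so it can be formed during a recursion on `γ`. -/
def ofSuccBelow (γ : Ordinal.{u}) (E : ∀ ε, ε < γ → Set X) : URel α X where
  rel ζ _ := ⋂ ε, ⋂ _ : ε + 1 ≤ ζ, ⋂ h : ε + 1 < γ, E (ε + 1) h
  zero _ := by simp
  succ_subset β _ _ :=
    Set.iInter_mono fun _ => Set.iInter_mono' fun hε => ⟨hε.trans (lt_add_one β).le, le_rfl⟩
  limit_eq β _ hlim := by
    ext x
    simp only [Set.mem_iInter]
    constructor
    · exact fun hx ζ hζ ε hε => hx ε (hε.trans hζ.le)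
    · exact fun hx ε hε => hx (ε + 1) ((hε.lt_or_eq.resolve_right
        (hlim.add_one_lt ((lt_add_one ε).trans_le hε)).ne)) ε le_rfl

theorem ofSuccBelow_rel_of_lt {γ ζ : Ordinal.{u}} (E : Ordinal.{u} → Set X) (hζγ : ζ < γ)
    (hζ : ζ < α) :
    (ofSuccBelow γ fun ε _ => E ε : URel α X).rel ζ hζ = ⋂ ε, ⋂ _ : ε + 1 ≤ ζ, E (ε + 1) :=
  Set.iInter₂_congr fun _ hε => iInf_pos (hε.trans_lt hζγ)

variable (F : URel α X → URel α X)

/-- Level `γ` of the fixed point: level `γ` of `F` applied to the uniform subset generated by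
the levels already built below `γ`. -/
noncomputable def approx (γ : Ordinal.{u}) : Set X :=
  if h : γ < α then (F (ofSuccBelow γ fun ε _ => approx ε)).rel γ h else ∅
termination_by γ

noncomputable def stage (γ : Ordinal.{u}) : URel α X :=
  ofSuccBelow γ fun ε _ => approx F ε

theorem approx_eq_rel_stage {γ : Ordinal.{u}} (h : γ < α) :
    approx F γ = (F (stage F γ)).rel γ h := by
  rw [approx, dif_pos h]
  rfl

theorem stage_nequiv {γ γ' ν : Ordinal.{u}} (hγ : ν < γ) (hγ' : ν < γ') :
    (stage F γ).NEquiv (stage F γ') ν := fun _ _ hην => by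
  rw [stage, stage, ofSuccBelow_rel_of_lt _ (hην.trans_lt hγ),
    ofSuccBelow_rel_of_lt _ (hην.trans_lt hγ')]

variable {F}

theorem _root_.Contractive.nequiv_stage (hF : Contractive F) {γ γ' μ : Ordinal.{u}}
    (hγ : μ ≤ γ) (hγ' : μ ≤ γ') : (F (stage F γ)).NEquiv (F (stage F γ')) μ :=
  nequiv_of_succ fun ν hν hνμ _ =>
    have hνγ : ν < γ := (lt_add_one ν).trans_le (hνμ.trans hγ)
    have hνγ' : ν < γ' := (lt_add_one ν).trans_le (hνμ.trans hγ')
    hF _ _ ν ((lt_add_one ν).trans hν) (stage_nequiv F hνγ hνγ') (ν + 1) hν le_rfl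

theorem _root_.Contractive.approx_eq_rel_stage_of_le (hF : Contractive F) {β γ : Ordinal.{u}}
    (hβγ : β ≤ γ) (hβ : β < α) : approx F β = (F (stage F γ)).rel β hβ := by
  rw [approx_eq_rel_stage F hβ]
  exact hF.nequiv_stage le_rfl hβγ β hβ le_rfl

theorem _root_.Contractive.approx_anti (hF : Contractive F) {β γ : Ordinal.{u}}
    (hβγ : β ≤ γ) (hγ : γ < α) : approx F γ ⊆ approx F β := by
  rw [hF.approx_eq_rel_stage_of_le le_rfl hγ,
    hF.approx_eq_rel_stage_of_le hβγ (hβγ.trans_lt hγ)]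
  exact rel_anti _ hβγ hγ

theorem _root_.Contractive.isFixedPt_stage (hF : Contractive F) : IsFixedPt F (stage F α) :=
  eq_of_succ fun ν hν _ => by
    rw [← hF.approx_eq_rel_stage_of_le hν.le hν, stage, ofSuccBelow_rel_of_lt _ hν hν]
    refine subset_antisymm ?_ (Set.iInter₂_subset ν (le_refl (ν + 1)))
    exact Set.subset_iInter₂ fun ε hε => hF.approx_anti hε hν

theorem _root_.Contractive.eq_of_isFixedPt (hF : Contractive F) {R S : URel α X}
    (hR : IsFixedPt F R) (hS : IsFixedPt F S) : R = S :=
  eq_of_succ fun ν hν hRS => by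
    rw [← hR, ← hS]
    exact hF R S ν ((lt_add_one ν).trans hν) hRS (ν + 1) hν le_rfl

end URel

theorem contractive_has_unique_fixed_point_general {α : Ordinal.{u}}
    {X : Type v} (F : URel α X → URel α X) (hF : Contractive F) :
    ∃! R : URel α X, F R = R :=
  ⟨URel.stage F α, hF.isFixedPt_stage, fun _ hS => hF.eq_of_isFixedPt hS hF.isFixedPt_stage⟩

/-- Every contractive function `F : URel_α(X) → URel_α(X)` (for `α` a limit
ordinal) has a unique fixed point. -/
theorem contractive_has_unique_fixed_point {α : Ordinal.{u}} (hα : Order.IsSuccLimit α)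
    {X : Type v} (F : URel α X → URel α X) (hF : Contractive F) :
    ∃! R : URel α X, F R = R :=
  contractive_has_unique_fixed_point_general F hF
end

section
/- Stratified must-convergence: for every closed term e of the calculus, e⇓ holds if and only if there exists an ordinal β < ω₁ (ω₁ the least uncountable ordinal) with e↯_β, where e↯_β is defined by ordinal induction: e↯_β iff for every e' with e ↦ e' there exists ν < β with e'↯_ν. -/
set_option maxHeartbeats 1000000

namespace CountChoice

/-! ## Syntax: types and terms (de Bruijn indices) -/

/-- Types: type variables, unit, products, functions, recursive sum types
`μα.(τ₁+…+τₙ)` (the `μ` binds one type variable, common to all summands),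
and universal types `∀α.τ`. -/
inductive Ty : Type where
  | var : ℕ → Ty
  | unit : Ty
  | prod : Ty → Ty → Ty
  | arrow : Ty → Ty → Ty
  | mu : (m : ℕ) → (Fin m → Ty) → Ty
  | all : Ty → Ty

/-- Lifting a renaming under a binder. -/
def liftR (f : ℕ → ℕ) : ℕ → ℕ
  | 0 => 0
  | i + 1 => f i + 1

def Ty.rename (f : ℕ → ℕ) : Ty → Ty
  | .var i => .var (f i)
  | .unit => .unit
  | .prod a b => .prod (a.rename f) (b.rename f)
  | .arrow a b => .arrow (a.rename f) (b.rename f)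
  | .mu m ts => .mu m (fun j => (ts j).rename (liftR f))
  | .all a => .all (a.rename (liftR f))

/-- Lifting a type substitution under a type binder. -/
def liftS (σ : ℕ → Ty) : ℕ → Ty
  | 0 => .var 0
  | i + 1 => (σ i).rename Nat.succ

def Ty.subst (σ : ℕ → Ty) : Ty → Ty
  | .var i => σ i
  | .unit => .unit
  | .prod a b => .prod (a.subst σ) (b.subst σ)
  | .arrow a b => .arrow (a.subst σ) (b.subst σ)
  | .mu m ts => .mu m (fun j => (ts j).subst (liftS σ))
  | .all a => .all (a.subst (liftS σ))

/-- Extending a type substitution (cons). -/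
def consTy (τ : Ty) (σ : ℕ → Ty) : ℕ → Ty
  | 0 => τ
  | i + 1 => σ i

/-- `Ty.subst1 σ τ` is `τ[σ/α]`, substitution of `σ` for the innermost
type variable of `τ`. -/
def Ty.subst1 (σ : Ty) (τ : Ty) : Ty := τ.subst (consTy σ Ty.var)

/-- `Ty.Wf Δ τ`: all free type variables of `τ` are among the first `Δ`. -/
def Ty.Wf : ℕ → Ty → Prop
  | Δ, .var i => i < Δ
  | _, .unit => True
  | Δ, .prod a b => a.Wf Δ ∧ b.Wf Δ
  | Δ, .arrow a b => a.Wf Δ ∧ b.Wf Δ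
  | Δ, .mu _ ts => ∀ j, (ts j).Wf (Δ + 1)
  | Δ, .all a => a.Wf (Δ + 1)

/-- Terms.  `case v m es` is `case v of (in₁ x₁.e₁ | … | inₘ xₘ.eₘ)`;
`choice` is the countable choice `?`; `proj false`/`proj true` are the two
projections; `tapp v τ` is type application `v τ`; `tlam` is `Λα.e`. -/
inductive Tm : Type where
  | var : ℕ → Tm
  | unit : Tm
  | pair : Tm → Tm → Tm
  | lam : Tm → Tm
  | inj : ℕ → Tm → Tm
  | tlam : Tm → Tm
  | choice : Tm
  | proj : Bool → Tm → Tm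
  | app : Tm → Tm → Tm
  | case : Tm → (m : ℕ) → (Fin m → Tm) → Tm
  | tapp : Tm → Ty → Tm

/-- Values. -/
inductive IsVal : Tm → Prop where
  | var : ∀ {x}, IsVal (.var x)
  | unit : IsVal .unit
  | pair : ∀ {v₁ v₂}, IsVal v₁ → IsVal v₂ → IsVal (.pair v₁ v₂)
  | lam : ∀ {e}, IsVal (.lam e)
  | inj : ∀ {j v}, IsVal v → IsVal (.inj j v)
  | tlam : ∀ {e}, IsVal (.tlam e)

/-- Renaming of term variables. -/
def Tm.rename (f : ℕ → ℕ) : Tm → Tm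
  | .var i => .var (f i)
  | .unit => .unit
  | .pair a b => .pair (a.rename f) (b.rename f)
  | .lam e => .lam (e.rename (liftR f))
  | .inj j v => .inj j (v.rename f)
  | .tlam e => .tlam (e.rename f)
  | .choice => .choice
  | .proj b v => .proj b (v.rename f)
  | .app a b => .app (a.rename f) (b.rename f)
  | .case v m es => .case (v.rename f) m (fun j => (es j).rename (liftR f))
  | .tapp v τ => .tapp (v.rename f) τ

/-- Renaming of type variables inside a term. -/
def Tm.tyRename (f : ℕ → ℕ) : Tm → Tm
  | .var i => .var i
  | .unit => .unit
  | .pair a b => .pair (a.tyRename f) (b.tyRename f)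
  | .lam e => .lam (e.tyRename f)
  | .inj j v => .inj j (v.tyRename f)
  | .tlam e => .tlam (e.tyRename (liftR f))
  | .choice => .choice
  | .proj b v => .proj b (v.tyRename f)
  | .app a b => .app (a.tyRename f) (b.tyRename f)
  | .case v m es => .case (v.tyRename f) m (fun j => (es j).tyRename f)
  | .tapp v τ => .tapp (v.tyRename f) (τ.rename f)

/-- Lifting a term substitution under a term binder. -/
def liftT (σ : ℕ → Tm) : ℕ → Tm
  | 0 => .var 0
  | i + 1 => (σ i).rename Nat.succ

/-- Substitution of terms for term variables. -/
def Tm.subst (σ : ℕ → Tm) : Tm → Tm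
  | .var i => σ i
  | .unit => .unit
  | .pair a b => .pair (a.subst σ) (b.subst σ)
  | .lam e => .lam (e.subst (liftT σ))
  | .inj j v => .inj j (v.subst σ)
  | .tlam e => .tlam (e.subst (fun i => (σ i).tyRename Nat.succ))
  | .choice => .choice
  | .proj b v => .proj b (v.subst σ)
  | .app a b => .app (a.subst σ) (b.subst σ)
  | .case v m es => .case (v.subst σ) m (fun j => (es j).subst (liftT σ))
  | .tapp v τ => .tapp (v.subst σ) τ

/-- Substitution of types for type variables inside a term. -/
def Tm.tySubst (σ : ℕ → Ty) : Tm → Tm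
  | .var i => .var i
  | .unit => .unit
  | .pair a b => .pair (a.tySubst σ) (b.tySubst σ)
  | .lam e => .lam (e.tySubst σ)
  | .inj j v => .inj j (v.tySubst σ)
  | .tlam e => .tlam (e.tySubst (liftS σ))
  | .choice => .choice
  | .proj b v => .proj b (v.tySubst σ)
  | .app a b => .app (a.tySubst σ) (b.tySubst σ)
  | .case v m es => .case (v.tySubst σ) m (fun j => (es j).tySubst σ)
  | .tapp v τ => .tapp (v.tySubst σ) (τ.subst σ)

/-- Extending a term substitution (cons). -/
def consTm (v : Tm) (σ : ℕ → Tm) : ℕ → Tm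
  | 0 => v
  | i + 1 => σ i

/-- `subst1 v e` is `e[v/x]` for the innermost term variable. -/
def subst1 (v : Tm) (e : Tm) : Tm := e.subst (consTm v Tm.var)

/-- `tySubst1 σ e` is `e[σ/α]` for the innermost type variable. -/
def tySubst1 (σ : Ty) (e : Tm) : Tm := e.tySubst (consTy σ Ty.var)

/-- A term is closed if it is invariant under all term- and type-variable
substitutions. -/
def Tm.Closed (e : Tm) : Prop :=
  (∀ σ : ℕ → Tm, e.subst σ = e) ∧ (∀ σ : ℕ → Ty, e.tySubst σ = e)

/-! ## Numerals and the type of natural numbers -/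

/-- `nat = μα.(1+α)`. -/
def natTy : Ty := .mu 2 ![.unit, .var 0]

/-- Numerals `n̲`. -/
def numeral : ℕ → Tm
  | 0 => .inj 0 .unit
  | n + 1 => .inj 1 (numeral n)

/-! ## Operational semantics -/

/-- Labels classifying reduction steps.  `unfold` labels the unfold-fold
(case) reductions, `choice` labels the `? ↦ n̲` reductions. -/
inductive Lbl : Type where
  | beta | projred | tbeta | unfold | choice

/-- Labeled one-step reduction. -/
inductive Step : Tm → Lbl → Tm → Prop where
  | projFst : ∀ {v₁ v₂}, IsVal v₁ → IsVal v₂ →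
      Step (.proj false (.pair v₁ v₂)) .projred v₁
  | projSnd : ∀ {v₁ v₂}, IsVal v₁ → IsVal v₂ →
      Step (.proj true (.pair v₁ v₂)) .projred v₂
  | beta : ∀ {e v}, IsVal v → Step (.app (.lam e) v) .beta (subst1 v e)
  | tbeta : ∀ {e τ}, Step (.tapp (.tlam e) τ) .tbeta (tySubst1 τ e)
  | caseInj : ∀ {m : ℕ} {es : Fin m → Tm} {j : ℕ} {v} (h : j < m), IsVal v →
      Step (.case (.inj j v) m es) .unfold (subst1 v (es ⟨j, h⟩))
  | choice : ∀ n : ℕ, Step .choice .choice (numeral n)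
  | appArg : ∀ {v e l e'}, IsVal v → Step e l e' → Step (.app v e) l (.app v e')

/-- One-step reduction `e ↦ e'`. -/
def Red (e e' : Tm) : Prop := ∃ l, Step e l e'

/-- `StepsU e n e'`: `e ↦* e'` with exactly `n` unfold-fold reductions in
the sequence. -/
inductive StepsU : Tm → ℕ → Tm → Prop where
  | refl : ∀ {e}, StepsU e 0 e
  | unfold : ∀ {e e₁ n e₂}, Step e .unfold e₁ → StepsU e₁ n e₂ → StepsU e (n + 1) e₂
  | other : ∀ {e l e₁ n e₂}, l ≠ .unfold → Step e l e₁ → StepsU e₁ n e₂ → StepsU e n e₂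

/-- May-convergence `e↓`. -/
def MayConv (e : Tm) : Prop := ∃ n v, StepsU e n v ∧ IsVal v

/-- `e↓ₙ`: `e` reduces to a value with at most `n` unfold-fold reductions. -/
def MayConvN (e : Tm) (n : ℕ) : Prop := ∃ m ≤ n, ∃ v, StepsU e m v ∧ IsVal v

/-- `e ⇝¹ e'`: `e ↦* e'` with exactly one unfold-fold reduction. -/
def UnfoldOne (e e' : Tm) : Prop := StepsU e 1 e'

/-- `e ⇝ᵖ e'`: `e ↦* e'` with no choice reductions. -/
inductive PSteps : Tm → Tm → Prop where
  | refl : ∀ {e}, PSteps e e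
  | step : ∀ {e l e₁ e₂}, l ≠ .choice → Step e l e₁ → PSteps e₁ e₂ → PSteps e e₂

/-- `e ⇝ᵖ⁰ e'`: `e ↦* e'` with no choice reductions and no unfold-fold
reductions. -/
inductive P0Steps : Tm → Tm → Prop where
  | refl : ∀ {e}, P0Steps e e
  | step : ∀ {e l e₁ e₂}, l ≠ .choice → l ≠ .unfold → Step e l e₁ →
      P0Steps e₁ e₂ → P0Steps e e₂

/-- Must-convergence `e⇓`: the least predicate closed under the rule
"if every one-step reduct of `e` must-converges then so does `e`". -/
inductive Must : Tm → Prop where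
  | intro : ∀ {e}, (∀ e', Red e e' → Must e') → Must e

/-- The least uncountable ordinal `ω₁`. -/
noncomputable def omega1 : Ordinal.{0} := (Cardinal.aleph 1).ord

/-- The stratified predicate `e↯_β`, defined by ordinal induction:
`e↯_β` iff every one-step reduct `e'` of `e` satisfies `e'↯_ν`
for some `ν < β`. -/
def Lightning (β : Ordinal.{0}) (e : Tm) : Prop :=
  ∀ e', Red e e' → ∃ ν : {ν : Ordinal.{0} // ν < β}, Lightning ν.1 e'
termination_by β
decreasing_by exact ν.2

/-- The stratified must-convergence predicate `e⇓_β`, defined by ordinal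
induction: `e⇓_β` iff whenever `e ⇝¹ e'` there is `ν < β` with `e'⇓_ν`. -/
def MustStrat (β : Ordinal.{0}) (e : Tm) : Prop :=
  ∀ e', UnfoldOne e e' → ∃ ν : {ν : Ordinal.{0} // ν < β}, MustStrat ν.1 e'
termination_by β
decreasing_by exact ν.2

/-! ## Typing -/

/-- `Δ ⊢ Γ`: all types in the context are well-formed in `Δ`. -/
def CtxWf (Δ : ℕ) (Γ : List Ty) : Prop := ∀ τ ∈ Γ, Ty.Wf Δ τ

/-- The typing judgement `Δ;Γ ⊢ e : τ` (`Δ` counts type variables, `Γ` is the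
list of types of term variables, innermost first). -/
inductive HasTy : ℕ → List Ty → Tm → Ty → Prop where
  | var : ∀ {Δ Γ x τ}, CtxWf Δ Γ → Γ[x]? = some τ → HasTy Δ Γ (.var x) τ
  | unit : ∀ {Δ Γ}, CtxWf Δ Γ → HasTy Δ Γ .unit .unit
  | pair : ∀ {Δ Γ v₁ v₂ τ₁ τ₂}, IsVal v₁ → IsVal v₂ →
      HasTy Δ Γ v₁ τ₁ → HasTy Δ Γ v₂ τ₂ → HasTy Δ Γ (.pair v₁ v₂) (.prod τ₁ τ₂)
  | lam : ∀ {Δ Γ e τ₁ τ₂}, Ty.Wf Δ τ₁ → HasTy Δ (τ₁ :: Γ) e τ₂ →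
      HasTy Δ Γ (.lam e) (.arrow τ₁ τ₂)
  | inj : ∀ {Δ Γ v} {m : ℕ} {ts : Fin m → Ty} {j : ℕ} (h : j < m), IsVal v →
      Ty.Wf Δ (.mu m ts) →
      HasTy Δ Γ v (Ty.subst1 (.mu m ts) (ts ⟨j, h⟩)) →
      HasTy Δ Γ (.inj j v) (.mu m ts)
  | tlam : ∀ {Δ Γ e τ}, HasTy (Δ + 1) (Γ.map (Ty.rename Nat.succ)) e τ →
      HasTy Δ Γ (.tlam e) (.all τ)
  | proj : ∀ {Δ Γ v τ₁ τ₂} (b : Bool), IsVal v → HasTy Δ Γ v (.prod τ₁ τ₂) →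
      HasTy Δ Γ (.proj b v) (bif b then τ₂ else τ₁)
  | app : ∀ {Δ Γ v e τ₁ τ₂}, IsVal v → HasTy Δ Γ v (.arrow τ₁ τ₂) →
      HasTy Δ Γ e τ₁ → HasTy Δ Γ (.app v e) τ₂
  | case : ∀ {Δ Γ v τ'} {m : ℕ} {ts : Fin m → Ty} {es : Fin m → Tm}, IsVal v →
      HasTy Δ Γ v (.mu m ts) →
      (∀ j : Fin m, HasTy Δ (Ty.subst1 (.mu m ts) (ts j) :: Γ) (es j) τ') →
      HasTy Δ Γ (.case v m es) τ'
  | tapp : ∀ {Δ Γ v τ σ}, IsVal v → HasTy Δ Γ v (.all τ) → Ty.Wf Δ σ →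
      HasTy Δ Γ (.tapp v σ) (Ty.subst1 σ τ)
  | choice : ∀ {Δ Γ}, CtxWf Δ Γ → HasTy Δ Γ .choice natTy

/-! ## Evaluation contexts -/

/-- Evaluation contexts `E ::= [] | v E` are represented as lists of the
applied values, outermost first. -/
def plug (E : List Tm) (e : Tm) : Tm := E.foldr .app e

/-- Typing of evaluation contexts, `⊢ E : τ ⊸ τ'`. -/
inductive ECtxTy : List Tm → Ty → Ty → Prop where
  | nil : ∀ {τ}, Ty.Wf 0 τ → ECtxTy [] τ τ
  | cons : ∀ {v E τ₁ τ τ₂}, IsVal v → HasTy 0 [] v (.arrow τ τ₂) →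
      ECtxTy E τ₁ τ → ECtxTy (v :: E) τ₁ τ₂

/-! ## CIU preorders -/

/-- A closing type substitution `δ ∈ Type^Δ`. -/
def TySubstOK (Δ : ℕ) (δ : ℕ → Ty) : Prop := ∀ i < Δ, Ty.Wf 0 (δ i)

/-- A type-respecting closing value substitution `γ ∈ Subst(Γ)`. -/
def SubstOK (Γ : List Ty) (γ : ℕ → Tm) : Prop :=
  ∀ i τ, Γ[i]? = some τ → IsVal (γ i) ∧ HasTy 0 [] (γ i) τ

/-- The may-CIU preorder `Δ;Γ ⊢ e ≾↓ciu e' : τ`. -/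
def CiuMay (Δ : ℕ) (Γ : List Ty) (e e' : Tm) (τ : Ty) : Prop :=
  HasTy Δ Γ e τ ∧ HasTy Δ Γ e' τ ∧
  ∀ δ, TySubstOK Δ δ → ∀ γ, SubstOK (Γ.map (Ty.subst δ)) γ →
  ∀ E τ', ECtxTy E (τ.subst δ) τ' →
  MayConv (plug E ((e.tySubst δ).subst γ)) → MayConv (plug E ((e'.tySubst δ).subst γ))

/-- The must-CIU preorder `Δ;Γ ⊢ e ≾⇓ciu e' : τ`. -/
def CiuMust (Δ : ℕ) (Γ : List Ty) (e e' : Tm) (τ : Ty) : Prop :=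
  HasTy Δ Γ e τ ∧ HasTy Δ Γ e' τ ∧
  ∀ δ, TySubstOK Δ δ → ∀ γ, SubstOK (Γ.map (Ty.subst δ)) γ →
  ∀ E τ', ECtxTy E (τ.subst δ) τ' →
  Must (plug E ((e.tySubst δ).subst γ)) → Must (plug E ((e'.tySubst δ).subst γ))

/-! ## Type-indexed relations, precongruences and contextual approximation -/

/-- A type-indexed relation. -/
def TIRel : Type := ℕ → List Ty → Tm → Tm → Ty → Prop

/-- A type-indexed relation relates only well-typed terms. -/
def WellTypedRel (R : TIRel) : Prop :=
  ∀ Δ Γ e e' τ, R Δ Γ e e' τ → HasTy Δ Γ e τ ∧ HasTy Δ Γ e' τ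

def ReflRel (R : TIRel) : Prop := ∀ Δ Γ e τ, HasTy Δ Γ e τ → R Δ Γ e e τ

def TransRel (R : TIRel) : Prop :=
  ∀ Δ Γ e₁ e₂ e₃ τ, R Δ Γ e₁ e₂ τ → R Δ Γ e₂ e₃ τ → R Δ Γ e₁ e₃ τ

/-- The compatibility rules (one for each term former). -/
structure Compatible (R : TIRel) : Prop where
  var : ∀ {Δ Γ x τ}, CtxWf Δ Γ → Γ[x]? = some τ → R Δ Γ (.var x) (.var x) τ
  unit : ∀ {Δ Γ}, CtxWf Δ Γ → R Δ Γ .unit .unit .unit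
  pair : ∀ {Δ Γ v₁ v₂ v₁' v₂' τ₁ τ₂}, IsVal v₁ → IsVal v₂ → IsVal v₁' → IsVal v₂' →
      R Δ Γ v₁ v₁' τ₁ → R Δ Γ v₂ v₂' τ₂ →
      R Δ Γ (.pair v₁ v₂) (.pair v₁' v₂') (.prod τ₁ τ₂)
  lam : ∀ {Δ Γ e e' τ₁ τ₂}, Ty.Wf Δ τ₁ → R Δ (τ₁ :: Γ) e e' τ₂ →
      R Δ Γ (.lam e) (.lam e') (.arrow τ₁ τ₂)
  inj : ∀ {Δ Γ v v'} {m : ℕ} {ts : Fin m → Ty} {j : ℕ} (h : j < m),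
      IsVal v → IsVal v' → Ty.Wf Δ (.mu m ts) →
      R Δ Γ v v' (Ty.subst1 (.mu m ts) (ts ⟨j, h⟩)) →
      R Δ Γ (.inj j v) (.inj j v') (.mu m ts)
  tlam : ∀ {Δ Γ e e' τ}, R (Δ + 1) (Γ.map (Ty.rename Nat.succ)) e e' τ →
      R Δ Γ (.tlam e) (.tlam e') (.all τ)
  proj : ∀ {Δ Γ v v' τ₁ τ₂} (b : Bool), IsVal v → IsVal v' →
      R Δ Γ v v' (.prod τ₁ τ₂) →
      R Δ Γ (.proj b v) (.proj b v') (bif b then τ₂ else τ₁)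
  app : ∀ {Δ Γ v v' e e' τ₁ τ₂}, IsVal v → IsVal v' →
      R Δ Γ v v' (.arrow τ₁ τ₂) → R Δ Γ e e' τ₁ →
      R Δ Γ (.app v e) (.app v' e') τ₂
  case : ∀ {Δ Γ v v' τ'} {m : ℕ} {ts : Fin m → Ty} {es es' : Fin m → Tm},
      IsVal v → IsVal v' → R Δ Γ v v' (.mu m ts) →
      (∀ j : Fin m, R Δ (Ty.subst1 (.mu m ts) (ts j) :: Γ) (es j) (es' j) τ') →
      R Δ Γ (.case v m es) (.case v' m es') τ'
  tapp : ∀ {Δ Γ v v' τ σ}, IsVal v → IsVal v' → R Δ Γ v v' (.all τ) →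
      Ty.Wf Δ σ → R Δ Γ (.tapp v σ) (.tapp v' σ) (Ty.subst1 σ τ)
  choice : ∀ {Δ Γ}, CtxWf Δ Γ → R Δ Γ .choice .choice natTy

/-- May-adequacy. -/
def MayAdequate (R : TIRel) : Prop :=
  ∀ e e' τ, R 0 [] e e' τ → MayConv e → MayConv e'

/-- Must-adequacy. -/
def MustAdequate (R : TIRel) : Prop :=
  ∀ e e' τ, R 0 [] e e' τ → Must e → Must e'

/-- May-contextual approximation `Δ;Γ ⊢ e ≾↓ctx e' : τ`: the largest
may-adequate precongruence. -/
def CtxMay (Δ : ℕ) (Γ : List Ty) (e e' : Tm) (τ : Ty) : Prop :=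
  ∃ R : TIRel, WellTypedRel R ∧ ReflRel R ∧ TransRel R ∧ Compatible R ∧
    MayAdequate R ∧ R Δ Γ e e' τ

/-- Must-contextual approximation `Δ;Γ ⊢ e ≾⇓ctx e' : τ`: the largest
must-adequate precongruence. -/
def CtxMust (Δ : ℕ) (Γ : List Ty) (e e' : Tm) (τ : Ty) : Prop :=
  ∃ R : TIRel, WellTypedRel R ∧ ReflRel R ∧ TransRel R ∧ Compatible R ∧
    MustAdequate R ∧ R Δ Γ e e' τ

/-- May-contextual equivalence `≅↓ctx`. -/
def CtxMayEq (Δ : ℕ) (Γ : List Ty) (e e' : Tm) (τ : Ty) : Prop :=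
  CtxMay Δ Γ e e' τ ∧ CtxMay Δ Γ e' e τ

/-- Must-contextual equivalence `≅⇓ctx`. -/
def CtxMustEq (Δ : ℕ) (Γ : List Ty) (e e' : Tm) (τ : Ty) : Prop :=
  CtxMust Δ Γ e e' τ ∧ CtxMust Δ Γ e' e τ

/-- Contextual equivalence `≅ctx` (intersection of may and must). -/
def CtxEq (Δ : ℕ) (Γ : List Ty) (e e' : Tm) (τ : Ty) : Prop :=
  CtxMayEq Δ Γ e e' τ ∧ CtxMustEq Δ Γ e e' τ

end CountChoice

namespace CountChoice

/-! ## Step-indexed uniform value relations and the may logical relation -/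

/-- Step-indexed relations on terms (indexed over `ω`). -/
def SIRel : Type := ℕ → Tm → Tm → Prop

/-- Extending a relational environment (cons). -/
def consRel (r : SIRel) (ρ : ℕ → SIRel) : ℕ → SIRel
  | 0 => r
  | i + 1 => ρ i

/-- `r ∈ VRel_ω(σ,σ')`: an `ω`-indexed uniform relation on `Val(σ) × Val(σ')`:
it relates only closed values of the given types, its 0-th component is all of
`Val(σ) × Val(σ')`, and it is decreasing in the index. -/
def IsVRel (σ σ' : Ty) (r : SIRel) : Prop :=
  (∀ n v v', r n v v' → (IsVal v ∧ HasTy 0 [] v σ) ∧ (IsVal v' ∧ HasTy 0 [] v' σ')) ∧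
  (∀ v v', IsVal v → HasTy 0 [] v σ → IsVal v' → HasTy 0 [] v' σ' → r 0 v v') ∧
  (∀ n v v', r (n + 1) v v' → r n v v')

/-- The lift `r⊤` of a step-indexed relation to evaluation contexts
(for may-convergence). -/
def sTopMay (r : SIRel) (n : ℕ) (E E' : List Tm) : Prop :=
  ∀ j ≤ n, ∀ v v', r j v v' → MayConvN (plug E v) j → MayConv (plug E' v')

/-- The biorthogonal lift `r⊤⊤` of a step-indexed relation to terms
(for may-convergence). -/
def ttopMay (r : SIRel) : SIRel := fun n e e' =>
  ∀ j ≤ n, ∀ E E', sTopMay r j E E' → MayConvN (plug E e) j → MayConv (plug E' e')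

/-- The may logical relation `⟦τ⟧(r⃗)`, given closing type substitutions
`δ, δ'` and a relational environment `ρ` with `ρ i ∈ VRel_ω(δ i, δ' i)`;
it is an `ω`-indexed uniform relation on `Val(τδ) × Val(τδ')`.
Recursive types are interpreted by the unique (guarded) fixed point
`fix s.⋃ⱼ inⱼ(▷⟦τⱼ⟧(r⃗,s))`, where `(▷R)ₙ = ⋂_{k<n} Rₖ`. -/
def interpMay : Ty → (ℕ → Ty) → (ℕ → Ty) → (ℕ → SIRel) → SIRel
  | .var i, _, _, ρ => ρ i
  | .unit, _, _, _ => fun _ v v' => v = .unit ∧ v' = .unit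
  | .prod τ₁ τ₂, δ, δ', ρ => fun n v v' =>
      ∃ v₁ v₂ v₁' v₂', v = .pair v₁ v₂ ∧ v' = .pair v₁' v₂' ∧
        interpMay τ₁ δ δ' ρ n v₁ v₁' ∧ interpMay τ₂ δ δ' ρ n v₂ v₂'
  | .arrow τ₁ τ₂, δ, δ', ρ => fun n v v' =>
      ∃ e e', v = .lam e ∧ v' = .lam e' ∧
        HasTy 0 [] v ((Ty.arrow τ₁ τ₂).subst δ) ∧
        HasTy 0 [] v' ((Ty.arrow τ₁ τ₂).subst δ') ∧
        ∀ m ≤ n, ∀ u u', interpMay τ₁ δ δ' ρ m u u' →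
          ttopMay (interpMay τ₂ δ δ' ρ) m (subst1 u e) (subst1 u' e')
  | .all τ, δ, δ', ρ => fun n v v' =>
      ∃ e e', v = .tlam e ∧ v' = .tlam e' ∧
        HasTy 0 [] v ((Ty.all τ).subst δ) ∧
        HasTy 0 [] v' ((Ty.all τ).subst δ') ∧
        ∀ σ σ', Ty.Wf 0 σ → Ty.Wf 0 σ' → ∀ r : SIRel, IsVRel σ σ' r →
          ttopMay (interpMay τ (consTy σ δ) (consTy σ' δ') (consRel r ρ)) n
            (tySubst1 σ e) (tySubst1 σ' e')
  | .mu m ts, δ, δ', ρ => fun n =>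
      Nat.strongRecOn (motive := fun _ => Tm → Tm → Prop) n
        (fun n ih v v' =>
          ∃ j, ∃ h : j < m, ∃ u u',
            v = .inj j u ∧ v' = .inj j u' ∧ IsVal u ∧ IsVal u' ∧
            HasTy 0 [] u (Ty.subst (consTy ((Ty.mu m ts).subst δ) δ) (ts ⟨j, h⟩)) ∧
            HasTy 0 [] u' (Ty.subst (consTy ((Ty.mu m ts).subst δ') δ') (ts ⟨j, h⟩)) ∧
            ∀ k, k < n →
              interpMay (ts ⟨j, h⟩)
                (consTy ((Ty.mu m ts).subst δ) δ)
                (consTy ((Ty.mu m ts).subst δ') δ')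
                (consRel (fun i u₁ u₂ => ∃ hi : i < n, ih i hi u₁ u₂) ρ) k u u')

/-- Pointwise relatedness of value substitutions, `(γ,γ') ∈ ⟦Γ⟧(r⃗)ₙ`. -/
def EnvRelMay (Γ : List Ty) (δ δ' : ℕ → Ty) (ρ : ℕ → SIRel) (n : ℕ)
    (γ γ' : ℕ → Tm) : Prop :=
  ∀ i τ, Γ[i]? = some τ → interpMay τ δ δ' ρ n (γ i) (γ' i)

/-- Logical may-approximation `Δ;Γ ⊢ e ≾↓log e' : τ`. -/
def LogMay (Δ : ℕ) (Γ : List Ty) (e e' : Tm) (τ : Ty) : Prop :=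
  HasTy Δ Γ e τ ∧ HasTy Δ Γ e' τ ∧
  ∀ δ δ', TySubstOK Δ δ → TySubstOK Δ δ' →
  ∀ ρ : ℕ → SIRel, (∀ i < Δ, IsVRel (δ i) (δ' i) (ρ i)) →
  ∀ n γ γ', EnvRelMay Γ δ δ' ρ n γ γ' →
  ttopMay (interpMay τ δ δ' ρ) n ((e.tySubst δ).subst γ) ((e'.tySubst δ').subst γ')

end CountChoice

namespace CountChoice

/-! ## Ordinal-indexed uniform value relations and the must logical relation -/

/-- Ordinal-indexed relations on terms. -/
def OSIRel : Type 1 := Ordinal.{0} → Tm → Tm → Prop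

/-- Extending an ordinal-indexed relational environment (cons). -/
def consORel (r : OSIRel) (ρ : ℕ → OSIRel) : ℕ → OSIRel
  | 0 => r
  | i + 1 => ρ i

/-- `r ∈ VRel_ω₁(σ,σ')`: an ordinal-indexed uniform relation on
`Val(σ) × Val(σ')`: it relates only closed values of the given types, its
0-th component is all of `Val(σ) × Val(σ')`, it is decreasing at successors
and it is the intersection of the earlier components at limits. -/
def IsOVRel (σ σ' : Ty) (r : OSIRel) : Prop :=
  (∀ β v v', r β v v' → (IsVal v ∧ HasTy 0 [] v σ) ∧ (IsVal v' ∧ HasTy 0 [] v' σ')) ∧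
  (∀ v v', IsVal v → HasTy 0 [] v σ → IsVal v' → HasTy 0 [] v' σ' → r 0 v v') ∧
  (∀ β v v', r (β + 1) v v' → r β v v') ∧
  (∀ β, Order.IsSuccLimit β → ∀ v v', (r β v v' ↔ ∀ ν < β, r ν v v'))

/-- The lift `r⊤` of an ordinal-indexed relation to evaluation contexts
(for must-convergence). -/
def sTopMust (r : OSIRel) (β : Ordinal.{0}) (E E' : List Tm) : Prop :=
  ∀ ν ≤ β, ∀ v v', r ν v v' → MustStrat ν (plug E v) → Must (plug E' v')

/-- The biorthogonal lift `r⊤⊤` of an ordinal-indexed relation to terms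
(for must-convergence). -/
def ttopMust (r : OSIRel) : OSIRel := fun β e e' =>
  ∀ ν ≤ β, ∀ E E', sTopMust r ν E E' → MustStrat ν (plug E e) → Must (plug E' e')

/-- The must logical relation `⟦τ⟧(r⃗)`, an ordinal-indexed uniform relation,
defined exactly as the may logical relation but with the must-biorthogonal
lifts. -/
def interpMust : Ty → (ℕ → Ty) → (ℕ → Ty) → (ℕ → OSIRel) → OSIRel
  | .var i, _, _, ρ => ρ i
  | .unit, _, _, _ => fun _ v v' => v = .unit ∧ v' = .unit
  | .prod τ₁ τ₂, δ, δ', ρ => fun β v v' =>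
      ∃ v₁ v₂ v₁' v₂', v = .pair v₁ v₂ ∧ v' = .pair v₁' v₂' ∧
        interpMust τ₁ δ δ' ρ β v₁ v₁' ∧ interpMust τ₂ δ δ' ρ β v₂ v₂'
  | .arrow τ₁ τ₂, δ, δ', ρ => fun β v v' =>
      ∃ e e', v = .lam e ∧ v' = .lam e' ∧
        HasTy 0 [] v ((Ty.arrow τ₁ τ₂).subst δ) ∧
        HasTy 0 [] v' ((Ty.arrow τ₁ τ₂).subst δ') ∧
        ∀ ν ≤ β, ∀ u u', interpMust τ₁ δ δ' ρ ν u u' →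
          ttopMust (interpMust τ₂ δ δ' ρ) ν (subst1 u e) (subst1 u' e')
  | .all τ, δ, δ', ρ => fun β v v' =>
      ∃ e e', v = .tlam e ∧ v' = .tlam e' ∧
        HasTy 0 [] v ((Ty.all τ).subst δ) ∧
        HasTy 0 [] v' ((Ty.all τ).subst δ') ∧
        ∀ σ σ', Ty.Wf 0 σ → Ty.Wf 0 σ' → ∀ r : OSIRel, IsOVRel σ σ' r →
          ttopMust (interpMust τ (consTy σ δ) (consTy σ' δ') (consORel r ρ)) β
            (tySubst1 σ e) (tySubst1 σ' e')
  | .mu m ts, δ, δ', ρ => fun β =>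
      (wellFounded_lt (α := Ordinal.{0})).fix
        (C := fun _ => Tm → Tm → Prop)
        (fun β ih v v' =>
          ∃ j, ∃ h : j < m, ∃ u u',
            v = .inj j u ∧ v' = .inj j u' ∧ IsVal u ∧ IsVal u' ∧
            HasTy 0 [] u (Ty.subst (consTy ((Ty.mu m ts).subst δ) δ) (ts ⟨j, h⟩)) ∧
            HasTy 0 [] u' (Ty.subst (consTy ((Ty.mu m ts).subst δ') δ') (ts ⟨j, h⟩)) ∧
            ∀ ν, ν < β →
              interpMust (ts ⟨j, h⟩)
                (consTy ((Ty.mu m ts).subst δ) δ)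
                (consTy ((Ty.mu m ts).subst δ') δ')
                (consORel (fun i u₁ u₂ => ∃ hi : i < β, ih i hi u₁ u₂) ρ) ν u u')
        β

/-- Pointwise relatedness of value substitutions, `(γ,γ') ∈ ⟦Γ⟧(r⃗)_β`. -/
def EnvRelMust (Γ : List Ty) (δ δ' : ℕ → Ty) (ρ : ℕ → OSIRel) (β : Ordinal.{0})
    (γ γ' : ℕ → Tm) : Prop :=
  ∀ i τ, Γ[i]? = some τ → interpMust τ δ δ' ρ β (γ i) (γ' i)

/-- Logical must-approximation `Δ;Γ ⊢ e ≾⇓log e' : τ`. -/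
def LogMust (Δ : ℕ) (Γ : List Ty) (e e' : Tm) (τ : Ty) : Prop :=
  HasTy Δ Γ e τ ∧ HasTy Δ Γ e' τ ∧
  ∀ δ δ', TySubstOK Δ δ → TySubstOK Δ δ' →
  ∀ ρ : ℕ → OSIRel, (∀ i < Δ, IsOVRel (δ i) (δ' i) (ρ i)) →
  ∀ β < omega1, ∀ γ γ', EnvRelMust Γ δ δ' ρ β γ γ' →
  ttopMust (interpMust τ δ δ' ρ) β ((e.tySubst δ).subst γ) ((e'.tySubst δ').subst γ')

end CountChoice

namespace CountChoice

/-! ## Derived terms -/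

/-- `let x = e₁ in e₂`, i.e. `(λx.e₂) e₁`. -/
def letIn (e₁ e₂ : Tm) : Tm := .app (.lam e₂) e₁

/-- The term `δ_f = λy.case y of (in y'. f(λx.let r = y' y in r x))`,
where `f` is the term variable of de Bruijn index 0 outside. -/
def deltaTm : Tm :=
  .lam (.case (.var 0) 1
    ![.app (.var 2)
        (.lam (letIn (.app (.var 1) (.var 2)) (.app (.var 0) (.var 1))))])

/-- The fixed point combinator
`fix = Λα,β.λf.δ_f(in δ_f) : ∀α,β.((α→β)→(α→β))→(α→β)`. -/
def fixTm : Tm := .tlam (.tlam (.lam (.app deltaTm (.inj 0 deltaTm))))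

/-- `fix τ₁ τ₂ v`, i.e. `let x = fix τ₁ in let y = x τ₂ in y v`. -/
def fixApp (τ₁ τ₂ : Ty) (v : Tm) : Tm :=
  letIn (.tapp fixTm τ₁)
    (letIn (.tapp (.var 0) τ₂) (.app (.var 0) (v.rename (· + 2))))

/-- The identity `id = λx.x`. -/
def idTm : Tm := .lam (.var 0)

/-- The divergent term `Ω = Λα.(fix 1 α)(λf.f)⟨⟩ : ∀α.α`. -/
def OmegaTm : Tm :=
  .tlam (letIn (fixApp .unit (.var 0) (.lam (.var 0))) (.app (.var 0) .unit))

/-- Erratic choice `e₁ or e₂`, i.e.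
`let x = ? in case x of (in₁ y.e₁ | in₂ y.e₂)`. -/
def orTm (e₁ e₂ : Tm) : Tm :=
  letIn .choice (.case (.var 0) 2 ![e₁.rename (· + 2), e₂.rename (· + 2)])

/-- Type application of a term: `w τ` abbreviates `let f = w in f τ`. -/
def letTapp (w : Tm) (τ : Ty) : Tm := letIn w (.tapp (.var 0) τ)

/-- `(λx.x t) w`: applies (the eventual value of) `w` to the closed term `t`. -/
def letAppArg (w t : Tm) : Tm := .app (.lam (.app (.var 0) t)) w

end CountChoice

namespace CountChoice

open Cardinal Ordinal

/-- An enumeration of the one-step reducts of `e` (onto them, plus junk values). Index `0` of an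
application is reserved for its β-reduct, so the reducts of the argument are shifted by one. -/
def reducts : Tm → ℕ → Tm
  | .choice, n => numeral n
  | .proj false (.pair v₁ _), _ => v₁
  | .proj true (.pair _ v₂), _ => v₂
  | .app (.lam e) v, 0 => subst1 v e
  | .app a b, n + 1 => .app a (reducts b n)
  | .tapp (.tlam e) τ, _ => tySubst1 τ e
  | .case (.inj j v) m es, _ => if h : j < m then subst1 v (es ⟨j, h⟩) else .unit
  | _, _ => .unit

theorem Step.mem_range_reducts {e e' : Tm} {l : Lbl} (h : Step e l e') :
    e' ∈ Set.range (reducts e) := by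
  induction h with
  | caseInj h => exact ⟨0, by simp [reducts, h]⟩
  | choice n => exact ⟨n, rfl⟩
  | appArg _ _ ih =>
    obtain ⟨n, rfl⟩ := ih
    exact ⟨n + 1, by simp [reducts]⟩
  | _ => exact ⟨0, rfl⟩

theorem countable_setOf_red (e : Tm) : {e' | Red e e'}.Countable :=
  (Set.countable_range (reducts e)).mono fun _ ⟨_, h⟩ => h.mem_range_reducts

theorem omega1_eq_omega_one : omega1 = ω₁ :=
  ord_aleph 1

theorem lightning_iff {β : Ordinal.{0}} {e : Tm} :
    Lightning β e ↔ ∀ e', Red e e' → ∃ ν < β, Lightning ν e' := by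
  rw [Lightning]
  exact forall₂_congr fun _ _ => ⟨fun ⟨ν, h⟩ => ⟨ν, ν.2, h⟩, fun ⟨ν, hν, h⟩ => ⟨⟨ν, hν⟩, h⟩⟩

theorem Lightning.must {β : Ordinal.{0}} {e : Tm} (h : Lightning β e) : Must e := by
  induction β using WellFoundedLT.induction generalizing e with
  | _ β ih =>
    refine Must.intro fun e' he' => ?_
    obtain ⟨ν, hν, h'⟩ := lightning_iff.1 h e' he'
    exact ih ν hν h'

/-- The stratification step: since `e` has only countably many reducts, the supremum of the
successors of their countable ranks is again countable. -/
theorem exists_lightning_of_forall_red {e : Tm}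
    (h : ∀ e', Red e e' → ∃ β < omega1, Lightning β e') : ∃ β < omega1, Lightning β e := by
  choose rank hrank_lt hrank using h
  have : Countable {e' // Red e e'} := (countable_setOf_red e).to_subtype
  let f : {e' // Red e e'} → Ordinal.{0} := fun x => Order.succ (rank x.1 x.2)
  refine ⟨⨆ x, f x, ?_, lightning_iff.2 fun e' he' => ⟨rank e' he', ?_, hrank e' he'⟩⟩
  · rw [omega1_eq_omega_one] at hrank_lt ⊢
    exact iSup_lt_omega_one fun x => (isSuccLimit_omega 1).succ_lt (hrank_lt x.1 x.2)
  · exact (Order.lt_succ _).trans_le (Ordinal.le_iSup f ⟨e', he'⟩)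

theorem stratified_must_convergence_general (e : Tm) :
    Must e ↔ ∃ β < omega1, Lightning β e := by
  refine ⟨fun hm => ?_, fun ⟨_, _, h⟩ => h.must⟩
  induction hm with
  | intro _ ih => exact exists_lightning_of_forall_red ih

/-- **Stratified must-convergence** (Lemma 5.1): a closed term `e`
must-converges if and only if `e↯_β` for some `β < ω₁`, the least
uncountable ordinal. -/
theorem stratified_must_convergence (e : Tm) (he : e.Closed) :
    Must e ↔ ∃ β < omega1, Lightning β e :=
  stratified_must_convergence_general e

end CountChoice
end

section
/- Substitution lemma for the may logical relation: if Δ,α ⊢ τ and Δ ⊢ τ' are well-formed types (Δ = α⃗), then for all closed types τ⃗,τ⃗' and all r⃗ ∈ VRel_ω(τ⃗,τ⃗'), ⟦τ[τ'/α]⟧(r⃗) = ⟦τ⟧(r⃗, ⟦τ'⟧(r⃗)). -/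
set_option maxHeartbeats 1000000

/-!
Since `interpMay` is defined by structural recursion on types and its clauses only ever
apply the closing substitutions `δ, δ'` and the relational environment `ρ` to variables,
`⟦τσ⟧(δ, δ', ρ) = ⟦τ⟧(σδ, σδ', ⟦σ⟧ρ)` holds for every simultaneous substitution `σ`, by
induction on `τ`. The binders `∀` and `μ` force the statement to be generalized to arbitrary
substitutions, and the case of a lifted substitution needs the same fact for renamings first.
In the `μ` case the two guarded fixed points are compared by strong induction on the step index.
-/

namespace CountChoice

theorem liftR_comp (f g : ℕ → ℕ) : liftR (g ∘ f) = liftR g ∘ liftR f := by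
  funext i; cases i <;> rfl

theorem Ty.rename_rename (τ : Ty) (f g : ℕ → ℕ) :
    (τ.rename f).rename g = τ.rename (g ∘ f) := by
  induction τ generalizing f g <;> simp [Ty.rename, liftR_comp, *]

theorem liftS_comp_liftR (σ : ℕ → Ty) (f : ℕ → ℕ) : liftS (σ ∘ f) = liftS σ ∘ liftR f := by
  funext i; cases i <;> rfl

theorem Ty.subst_rename (τ : Ty) (f : ℕ → ℕ) (σ : ℕ → Ty) :
    (τ.rename f).subst σ = τ.subst (σ ∘ f) := by
  induction τ generalizing f σ <;> simp [Ty.rename, Ty.subst, liftS_comp_liftR, *]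

theorem liftS_rename (σ : ℕ → Ty) (f : ℕ → ℕ) :
    liftS (fun i => (σ i).rename f) = fun i => (liftS σ i).rename (liftR f) := by
  funext i
  cases i with
  | zero => rfl
  | succ i => simp only [liftS, Ty.rename_rename]; rfl

theorem Ty.rename_subst (τ : Ty) (σ : ℕ → Ty) (f : ℕ → ℕ) :
    (τ.subst σ).rename f = τ.subst (fun i => (σ i).rename f) := by
  induction τ generalizing σ f <;> simp [Ty.rename, Ty.subst, liftS_rename, *]

theorem liftS_subst (σ δ : ℕ → Ty) :
    liftS (fun i => (σ i).subst δ) = fun i => (liftS σ i).subst (liftS δ) := by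
  funext i
  cases i with
  | zero => rfl
  | succ i => simp only [liftS, Ty.rename_subst, Ty.subst_rename]; rfl

theorem Ty.subst_subst (τ : Ty) (σ δ : ℕ → Ty) :
    (τ.subst σ).subst δ = τ.subst (fun i => (σ i).subst δ) := by
  induction τ generalizing σ δ <;> simp [Ty.subst, liftS_subst, *]

theorem consTy_comp_liftR (σ : Ty) (δ : ℕ → Ty) (f : ℕ → ℕ) :
    consTy σ δ ∘ liftR f = consTy σ (δ ∘ f) := by
  funext i; cases i <;> rfl

theorem consRel_comp_liftR (r : SIRel) (ρ : ℕ → SIRel) (f : ℕ → ℕ) :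
    consRel r ρ ∘ liftR f = consRel r (ρ ∘ f) := by
  funext i; cases i <;> rfl

theorem subst_consTy_var (τ : Ty) (δ : ℕ → Ty) :
    (fun i => (consTy τ Ty.var i).subst δ) = consTy (τ.subst δ) δ := by
  funext i; cases i <;> rfl

theorem subst_liftS_consTy (σ : ℕ → Ty) (τ : Ty) (δ : ℕ → Ty) :
    (fun i => (liftS σ i).subst (consTy τ δ)) = consTy τ (fun i => (σ i).subst δ) := by
  funext i
  cases i with
  | zero => rfl
  | succ i => exact Ty.subst_rename (σ i) Nat.succ (consTy τ δ)

/-- One unfolding of the guarded fixed point interpreting `μα.(τ₁+…+τₘ)`, given the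
relations `ih i` at the smaller indices `i < n`. -/
def muBody (m : ℕ) (ts : Fin m → Ty) (δ δ' : ℕ → Ty) (ρ : ℕ → SIRel)
    (n : ℕ) (ih : ∀ i, i < n → Tm → Tm → Prop) : Tm → Tm → Prop :=
  fun v v' =>
    ∃ j, ∃ h : j < m, ∃ u u',
      v = .inj j u ∧ v' = .inj j u' ∧ IsVal u ∧ IsVal u' ∧
      HasTy 0 [] u (Ty.subst (consTy ((Ty.mu m ts).subst δ) δ) (ts ⟨j, h⟩)) ∧
      HasTy 0 [] u' (Ty.subst (consTy ((Ty.mu m ts).subst δ') δ') (ts ⟨j, h⟩)) ∧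
      ∀ k, k < n →
        interpMay (ts ⟨j, h⟩)
          (consTy ((Ty.mu m ts).subst δ) δ)
          (consTy ((Ty.mu m ts).subst δ') δ')
          (consRel (fun i u₁ u₂ => ∃ hi : i < n, ih i hi u₁ u₂) ρ) k u u'

theorem interpMay_mu (m : ℕ) (ts : Fin m → Ty) (δ δ' : ℕ → Ty) (ρ : ℕ → SIRel) (n : ℕ) :
    interpMay (.mu m ts) δ δ' ρ n =
      muBody m ts δ δ' ρ n (fun i _ => interpMay (.mu m ts) δ δ' ρ i) := by
  -- `Nat.strongRecOn` unfolds to `WellFounded.fix` for `<` on `ℕ`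
  show Nat.lt_wfRel.wf.fix _ n = _
  rw [WellFounded.fix_eq]
  rfl

section Congr

variable {δ₁ δ₁' δ₂ δ₂' : ℕ → Ty} {ρ₁ ρ₂ : ℕ → SIRel}

theorem interpMay_prod_congr {a₁ b₁ a₂ b₂ : Ty}
    (ha : interpMay a₁ δ₁ δ₁' ρ₁ = interpMay a₂ δ₂ δ₂' ρ₂)
    (hb : interpMay b₁ δ₁ δ₁' ρ₁ = interpMay b₂ δ₂ δ₂' ρ₂) :
    interpMay (.prod a₁ b₁) δ₁ δ₁' ρ₁ = interpMay (.prod a₂ b₂) δ₂ δ₂' ρ₂ := by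
  simp only [interpMay]; rw [ha, hb]

theorem interpMay_arrow_congr {a₁ b₁ a₂ b₂ : Ty}
    (hδ : (Ty.arrow a₁ b₁).subst δ₁ = (Ty.arrow a₂ b₂).subst δ₂)
    (hδ' : (Ty.arrow a₁ b₁).subst δ₁' = (Ty.arrow a₂ b₂).subst δ₂')
    (ha : interpMay a₁ δ₁ δ₁' ρ₁ = interpMay a₂ δ₂ δ₂' ρ₂)
    (hb : interpMay b₁ δ₁ δ₁' ρ₁ = interpMay b₂ δ₂ δ₂' ρ₂) :
    interpMay (.arrow a₁ b₁) δ₁ δ₁' ρ₁ = interpMay (.arrow a₂ b₂) δ₂ δ₂' ρ₂ := by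
  simp only [interpMay]; rw [hδ, hδ', ha, hb]

theorem interpMay_all_congr {a₁ a₂ : Ty}
    (hδ : (Ty.all a₁).subst δ₁ = (Ty.all a₂).subst δ₂)
    (hδ' : (Ty.all a₁).subst δ₁' = (Ty.all a₂).subst δ₂')
    (ha : ∀ σ σ' r, interpMay a₁ (consTy σ δ₁) (consTy σ' δ₁') (consRel r ρ₁) =
      interpMay a₂ (consTy σ δ₂) (consTy σ' δ₂') (consRel r ρ₂)) :
    interpMay (.all a₁) δ₁ δ₁' ρ₁ = interpMay (.all a₂) δ₂ δ₂' ρ₂ := by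
  simp only [interpMay, hδ, hδ']
  funext n v v'
  simp only [ha]

theorem interpMay_mu_congr {m : ℕ} {ts₁ ts₂ : Fin m → Ty}
    (hδ : (Ty.mu m ts₁).subst δ₁ = (Ty.mu m ts₂).subst δ₂)
    (hδ' : (Ty.mu m ts₁).subst δ₁' = (Ty.mu m ts₂).subst δ₂')
    (hts : ∀ j σ, (ts₁ j).subst (consTy σ δ₁) = (ts₂ j).subst (consTy σ δ₂))
    (hts' : ∀ j σ, (ts₁ j).subst (consTy σ δ₁') = (ts₂ j).subst (consTy σ δ₂'))
    (h : ∀ j σ σ' r, interpMay (ts₁ j) (consTy σ δ₁) (consTy σ' δ₁') (consRel r ρ₁) =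
      interpMay (ts₂ j) (consTy σ δ₂) (consTy σ' δ₂') (consRel r ρ₂)) :
    interpMay (.mu m ts₁) δ₁ δ₁' ρ₁ = interpMay (.mu m ts₂) δ₂ δ₂' ρ₂ := by
  funext n
  induction n using Nat.strongRecOn with
  | _ n ih =>
    have hrec : (fun i u₁ u₂ => ∃ _ : i < n, interpMay (.mu m ts₁) δ₁ δ₁' ρ₁ i u₁ u₂) =
        (fun i u₁ u₂ => ∃ _ : i < n, interpMay (.mu m ts₂) δ₂ δ₂' ρ₂ i u₁ u₂) := by
      funext i u₁ u₂
      exact propext (exists_congr fun hi => by rw [ih i hi])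
    rw [interpMay_mu, interpMay_mu]
    unfold muBody
    -- `simp` cannot rewrite the applied relations `interpMay … k u u'` with `h` through `SIRel`
    unfold SIRel at h
    simp only [hδ, hδ', hts, hts', h, hrec]

end Congr

theorem interpMay_rename (τ : Ty) (f : ℕ → ℕ) (δ δ' : ℕ → Ty) (ρ : ℕ → SIRel) :
    interpMay (τ.rename f) δ δ' ρ = interpMay τ (δ ∘ f) (δ' ∘ f) (ρ ∘ f) := by
  induction τ generalizing f δ δ' ρ with
  | var i => rfl
  | unit => rfl
  | prod a b iha ihb => exact interpMay_prod_congr (iha f δ δ' ρ) (ihb f δ δ' ρ)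
  | arrow a b iha ihb =>
    exact interpMay_arrow_congr (Ty.subst_rename (.arrow a b) f δ)
      (Ty.subst_rename (.arrow a b) f δ') (iha f δ δ' ρ) (ihb f δ δ' ρ)
  | all a iha =>
    refine interpMay_all_congr (Ty.subst_rename (.all a) f δ) (Ty.subst_rename (.all a) f δ')
      fun σ σ' r => ?_
    rw [iha, consTy_comp_liftR, consTy_comp_liftR, consRel_comp_liftR]
  | mu m ts ih =>
    refine interpMay_mu_congr (Ty.subst_rename (.mu m ts) f δ) (Ty.subst_rename (.mu m ts) f δ')
      (fun j σ => ?_) (fun j σ => ?_) fun j σ σ' r => ?_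
    · rw [Ty.subst_rename, consTy_comp_liftR]
    · rw [Ty.subst_rename, consTy_comp_liftR]
    · rw [ih, consTy_comp_liftR, consTy_comp_liftR, consRel_comp_liftR]

theorem interpMay_liftS_consRel (σ : ℕ → Ty) (τ τ' : Ty) (δ δ' : ℕ → Ty)
    (r : SIRel) (ρ : ℕ → SIRel) :
    (fun i => interpMay (liftS σ i) (consTy τ δ) (consTy τ' δ') (consRel r ρ)) =
      consRel r (fun i => interpMay (σ i) δ δ' ρ) := by
  funext i
  cases i with
  | zero => rfl
  | succ i => exact interpMay_rename (σ i) Nat.succ _ _ _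

theorem interpMay_subst_parallel (τ : Ty) (σ δ δ' : ℕ → Ty) (ρ : ℕ → SIRel) :
    interpMay (τ.subst σ) δ δ' ρ =
      interpMay τ (fun i => (σ i).subst δ) (fun i => (σ i).subst δ')
        (fun i => interpMay (σ i) δ δ' ρ) := by
  induction τ generalizing σ δ δ' ρ with
  | var i => rfl
  | unit => rfl
  | prod a b iha ihb => exact interpMay_prod_congr (iha σ δ δ' ρ) (ihb σ δ δ' ρ)
  | arrow a b iha ihb =>
    exact interpMay_arrow_congr (Ty.subst_subst (.arrow a b) σ δ)
      (Ty.subst_subst (.arrow a b) σ δ') (iha σ δ δ' ρ) (ihb σ δ δ' ρ)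
  | all a iha =>
    refine interpMay_all_congr (Ty.subst_subst (.all a) σ δ) (Ty.subst_subst (.all a) σ δ')
      fun τ τ' r => ?_
    rw [iha, subst_liftS_consTy, subst_liftS_consTy, interpMay_liftS_consRel]
  | mu m ts ih =>
    refine interpMay_mu_congr (Ty.subst_subst (.mu m ts) σ δ) (Ty.subst_subst (.mu m ts) σ δ')
      (fun j τ => ?_) (fun j τ => ?_) fun j τ τ' r => ?_
    · rw [Ty.subst_subst, subst_liftS_consTy]
    · rw [Ty.subst_subst, subst_liftS_consTy]
    · rw [ih, subst_liftS_consTy, subst_liftS_consTy, interpMay_liftS_consRel]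

theorem interpMay_consTy_var (τ : Ty) (δ δ' : ℕ → Ty) (ρ : ℕ → SIRel) :
    (fun i => interpMay (consTy τ Ty.var i) δ δ' ρ) = consRel (interpMay τ δ δ' ρ) ρ := by
  funext i; cases i <;> rfl

theorem interpMay_subst_general (τ τ' : Ty) (δ δ' : ℕ → Ty) (ρ : ℕ → SIRel) :
    interpMay (Ty.subst1 τ' τ) δ δ' ρ =
      interpMay τ (consTy (τ'.subst δ) δ) (consTy (τ'.subst δ') δ')
        (consRel (interpMay τ' δ δ' ρ) ρ) := by
  rw [Ty.subst1, interpMay_subst_parallel, subst_consTy_var, subst_consTy_var,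
    interpMay_consTy_var]

/-- **Substitution lemma** (Lemma 4.1) for the may logical relation:
`⟦τ[τ'/α]⟧(r⃗) = ⟦τ⟧(r⃗, ⟦τ'⟧(r⃗))`, where `α` is the innermost type
variable of `Δ,α ⊢ τ`. -/
theorem interpMay_subst (Δ : ℕ) (τ τ' : Ty) (hτ : Ty.Wf (Δ + 1) τ)
    (hτ' : Ty.Wf Δ τ') (δ δ' : ℕ → Ty) (hδ : TySubstOK Δ δ) (hδ' : TySubstOK Δ δ')
    (ρ : ℕ → SIRel) (hρ : ∀ i < Δ, IsVRel (δ i) (δ' i) (ρ i)) :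
    interpMay (Ty.subst1 τ' τ) δ δ' ρ =
      interpMay τ (consTy (τ'.subst δ) δ) (consTy (τ'.subst δ') δ')
        (consRel (interpMay τ' δ δ' ρ) ρ) :=
  interpMay_subst_general τ τ' δ δ' ρ

end CountChoice
end

section
/- Context composition: for the may logical relation, if (v,v') ∈ (⟦τ₁→τ₂⟧r⃗)ₙ and (E,E') ∈ ((⟦τ₂⟧r⃗)⊤)ₙ, then (E[v []], E'[v' []]) ∈ ((⟦τ₁⟧r⃗)⊤)ₙ. -/
set_option maxHeartbeats 1000000

namespace CountChoice

/-!
`E[v []]` applied to `u` is `E[(λx.e) u]`; as `⟦τ₁⟧` relates only values, its only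
reduction is the β-step to `E[e[u/x]]`. A β-step is not an unfold-fold reduction, so it changes neither
may-convergence nor the number of unfold-fold reductions counted by `↓ⱼ`; hence
`(E[v []], E'[v' []])` inherits the context property from the function clause of
`⟦τ₁→τ₂⟧` applied to `(E, E')`.
-/

lemma IsVal.not_step {w : Tm} (hw : IsVal w) {l : Lbl} {w' : Tm} : ¬ Step w l w' := by
  intro hs; cases hw <;> cases hs

lemma not_isVal_app {a b : Tm} : ¬ IsVal (.app a b) := by
  intro h; cases h

lemma plug_append (E : List Tm) (v u : Tm) : plug (E ++ [v]) u = plug E (.app v u) := by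
  simp [plug, List.foldr_append]

lemma isVal_plug {E : List Tm} {X : Tm} (h : IsVal (plug E X)) : E = [] ∧ IsVal X := by
  cases E with
  | nil => exact ⟨rfl, h⟩
  | cons _ _ => exact absurd h not_isVal_app

lemma step_plug {E : List Tm} (hE : ∀ w ∈ E, IsVal w) {X X' : Tm} {l : Lbl}
    (h : Step X l X') : Step (plug E X) l (plug E X') := by
  induction E with
  | nil => exact h
  | cons w E ih =>
    exact .appArg (hE w List.mem_cons_self) (ih fun w' hw' => hE w' (List.mem_cons_of_mem _ hw'))

lemma Step.of_plug {E : List Tm} {X Y : Tm} {l : Lbl} (hX : ¬ IsVal X)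
    (h : Step (plug E X) l Y) : ∃ X', Step X l X' ∧ Y = plug E X' := by
  induction E generalizing Y with
  | nil => exact ⟨Y, h, rfl⟩
  | cons w E ih =>
    cases h with
    | beta hval => exact absurd (isVal_plug hval).2 hX
    | appArg _ hs =>
      obtain ⟨X', hX', rfl⟩ := ih hs
      exact ⟨X', hX', rfl⟩

lemma Step.forall_isVal_of_plug {E : List Tm} {X Y : Tm} {l : Lbl}
    (h : Step (plug E X) l Y) : ∀ w ∈ E, IsVal w := by
  induction E generalizing Y with
  | nil => simp
  | cons w E ih =>
    cases h with
    | beta hval =>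
      obtain ⟨rfl, -⟩ := isVal_plug hval
      simpa using IsVal.lam
    | appArg hw hs => exact List.forall_mem_cons.2 ⟨hw, ih hs⟩

lemma StepsU.forall_isVal_of_plug {E : List Tm} {X V : Tm} {m : ℕ}
    (h : StepsU (plug E X) m V) (hV : IsVal V) : ∀ w ∈ E, IsVal w := by
  cases h with
  | refl => simp [(isVal_plug hV).1]
  | unfold hs _ => exact hs.forall_isVal_of_plug
  | other _ hs _ => exact hs.forall_isVal_of_plug

lemma Step.eq_of_beta_redex {e u X : Tm} {l : Lbl} (hu : IsVal u)
    (h : Step (.app (.lam e) u) l X) : l = .beta ∧ X = subst1 u e := by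
  cases h with
  | beta _ => exact ⟨rfl, rfl⟩
  | appArg _ hs => exact absurd hs hu.not_step

lemma stepsU_plug_beta_iff {E : List Tm} {e u V : Tm} {m : ℕ} (hu : IsVal u) (hV : IsVal V) :
    StepsU (plug E (.app (.lam e) u)) m V ↔ StepsU (plug E (subst1 u e)) m V := by
  constructor
  · intro h
    cases h with
    | refl => exact absurd (isVal_plug hV).2 not_isVal_app
    | unfold hs _ =>
      obtain ⟨_, hX, -⟩ := hs.of_plug not_isVal_app
      nomatch (hX.eq_of_beta_redex hu).1
    | other _ hs hrest =>
      obtain ⟨_, hX, rfl⟩ := hs.of_plug not_isVal_app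
      rwa [(hX.eq_of_beta_redex hu).2] at hrest
  · intro h
    exact StepsU.other (l := .beta) nofun (step_plug (h.forall_isVal_of_plug hV) (Step.beta hu)) h

lemma mayConvN_plug_beta_iff {E : List Tm} {e u : Tm} {j : ℕ} (hu : IsVal u) :
    MayConvN (plug E (.app (.lam e) u)) j ↔ MayConvN (plug E (subst1 u e)) j := by
  simp only [MayConvN]
  exact exists_congr fun _ => and_congr_right fun _ => exists_congr fun _ =>
    and_congr_left (stepsU_plug_beta_iff hu)

lemma mayConv_plug_beta_iff {E : List Tm} {e u : Tm} (hu : IsVal u) :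
    MayConv (plug E (.app (.lam e) u)) ↔ MayConv (plug E (subst1 u e)) := by
  simp only [MayConv]
  exact exists_congr fun _ => exists_congr fun _ => and_congr_left (stepsU_plug_beta_iff hu)

lemma sTopMay.mono {r : SIRel} {n j : ℕ} {E E' : List Tm} (h : sTopMay r n E E')
    (hj : j ≤ n) : sTopMay r j E E' :=
  fun i hi => h i (hi.trans hj)

lemma IsVRel.isVal {σ σ' : Ty} {r : SIRel} (hr : IsVRel σ σ' r) {n : ℕ} {v v' : Tm}
    (h : r n v v') : IsVal v ∧ IsVal v' :=
  ⟨(hr.1 n v v' h).1.1, (hr.1 n v v' h).2.1⟩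

lemma interpMay_isVal {τ : Ty} {Δ : ℕ} {δ δ' : ℕ → Ty} {ρ : ℕ → SIRel} (hτ : Ty.Wf Δ τ)
    (hρ : ∀ i < Δ, ∀ n u u', ρ i n u u' → IsVal u ∧ IsVal u') {n : ℕ} {u u' : Tm}
    (h : interpMay τ δ δ' ρ n u u') : IsVal u ∧ IsVal u' := by
  induction τ generalizing n u u' with
  | var i => exact hρ i hτ n u u' h
  | unit =>
    obtain ⟨rfl, rfl⟩ := h
    exact ⟨.unit, .unit⟩
  | prod τ₁ τ₂ ih₁ ih₂ =>
    obtain ⟨_, _, _, _, rfl, rfl, h₁, h₂⟩ := h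
    exact ⟨.pair (ih₁ hτ.1 h₁).1 (ih₂ hτ.2 h₂).1, .pair (ih₁ hτ.1 h₁).2 (ih₂ hτ.2 h₂).2⟩
  | arrow =>
    obtain ⟨_, _, rfl, rfl, -⟩ := h
    exact ⟨.lam, .lam⟩
  | all =>
    obtain ⟨_, _, rfl, rfl, -⟩ := h
    exact ⟨.tlam, .tlam⟩
  | mu m ts =>
    rw [interpMay, Nat.strongRecOn_eq] at h
    obtain ⟨_, _, _, _, rfl, rfl, hw, hw', -⟩ := h
    exact ⟨.inj hw, .inj hw'⟩

theorem context_composition_general (Δ : ℕ) (τ₁ τ₂ : Ty) (hτ₁ : Ty.Wf Δ τ₁)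
    (δ δ' : ℕ → Ty) (ρ : ℕ → SIRel) (hρ : ∀ i < Δ, IsVRel (δ i) (δ' i) (ρ i))
    (n : ℕ) (v v' : Tm) (E E' : List Tm)
    (hv : interpMay (.arrow τ₁ τ₂) δ δ' ρ n v v')
    (hE : sTopMay (interpMay τ₂ δ δ' ρ) n E E') :
    sTopMay (interpMay τ₁ δ δ' ρ) n (E ++ [v]) (E' ++ [v']) := by
  intro j hj u u' hu hconv
  obtain ⟨e, e', rfl, rfl, -, -, hbody⟩ := hv
  obtain ⟨hu_val, hu'_val⟩ :=
    interpMay_isVal hτ₁ (fun i hi _ _ _ => (hρ i hi).isVal) hu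
  rw [plug_append] at hconv ⊢
  exact (mayConv_plug_beta_iff hu'_val).2 <|
    hbody j hj u u' hu j le_rfl E E' (hE.mono hj) ((mayConvN_plug_beta_iff hu_val).1 hconv)

/-- **Context composition** (Lemma 4.4): if `(v,v') ∈ ⟦τ₁→τ₂⟧(r⃗)ₙ` and
`(E,E') ∈ (⟦τ₂⟧(r⃗)⊤)ₙ` then `(E[v []], E'[v' []]) ∈ (⟦τ₁⟧(r⃗)⊤)ₙ`.
(The context `E[v []]` is represented by the list `E ++ [v]`.) -/
theorem context_composition (Δ : ℕ) (τ₁ τ₂ : Ty) (hτ₁ : Ty.Wf Δ τ₁)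
    (hτ₂ : Ty.Wf Δ τ₂) (δ δ' : ℕ → Ty) (hδ : TySubstOK Δ δ) (hδ' : TySubstOK Δ δ')
    (ρ : ℕ → SIRel) (hρ : ∀ i < Δ, IsVRel (δ i) (δ' i) (ρ i))
    (n : ℕ) (v v' : Tm) (E E' : List Tm)
    (hv : interpMay (.arrow τ₁ τ₂) δ δ' ρ n v v')
    (hE : sTopMay (interpMay τ₂ δ δ' ρ) n E E') :
    sTopMay (interpMay τ₁ δ δ' ρ) n (E ++ [v]) (E' ++ [v']) :=
  context_composition_general Δ τ₁ τ₂ hτ₁ δ δ' ρ hρ n v v' E E' hv hE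

end CountChoice
end
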